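/- Let A be a unital C*-algebra and let x ∈ M_{2n}(A) be self-adjoint and σ_{n,n}-positive. Then for every unital positive linear functional φ on A, the scalar matrix φ_{2n}(x) ∈ M_{2n}(ℂ) (obtained by applying φ entrywise) is σ_{n,n}-positive in M_{2n}(ℂ). -/

import Mathlib

open scoped Matrix ComplexOrder

variable {A : Type*} [NormedRing A] [StarRing A] [CStarRing A]
  [NormedAlgebra ℂ A] [CompleteSpace A] [StarModule ℂ A]

/-- Positivity in a matrix algebra over the C*-algebra `A`. -/
def MatPos {m : Type*} [Fintype m] (x : Matrix m m A) : Prop :=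
  ∃ y : Matrix m m A, x = yᴴ * y

/-- `x ∈ Mₙ(A)` is `α`-positive. -/
def IsAlphaPos {n : Type*} [Fintype n] (α : Matrix n n ℂ) (x : Matrix n n A) : Prop :=
  ∀ (m ℓ : ℕ) (γ : Fin ℓ → Matrix n (Fin m) ℂ),
    (∑ i, (γ i)ᴴ * α * γ i) = 0 →
    MatPos (∑ i, ((γ i).map (algebraMap ℂ A))ᴴ * x * ((γ i).map (algebraMap ℂ A)))

/-- `α`-positivity for scalar matrices. -/
def IsAlphaPosScalar {n : Type*} [Fintype n] (α : Matrix n n ℂ)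
    (x : Matrix n n ℂ) : Prop :=
  ∀ (m ℓ : ℕ) (γ : Fin ℓ → Matrix n (Fin m) ℂ),
    (∑ i, (γ i)ᴴ * α * γ i) = 0 →
    (∑ i, (γ i)ᴴ * x * γ i).PosSemidef

/-- `σ_{n,n} = 1_n ⊕ (−1_n)`. -/
def sigmaBlk (n : ℕ) : Matrix (Fin n ⊕ Fin n) (Fin n ⊕ Fin n) ℂ :=
  Matrix.fromBlocks 1 0 0 (-1)

lemma phi_conj {φ : A →ₗ[ℂ] ℂ} (hunital : φ 1 = 1)
    (hφpos : ∀ a : A, 0 ≤ φ (star a * a)) (a : A) :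
    φ (star a) = starRingEnd ℂ (φ a) := by
  have him : ∀ b : A, (φ (star b * b)).im = 0 := by
    intro b
    have h := hφpos b
    rw [Complex.le_def] at h
    simpa using h.2.symm
  have e1 : star (1 + a) * (1 + a) = 1 + a + star a + star a * a := by
    simp only [star_add, star_one]
    noncomm_ring
  have e2 : star (1 + Complex.I • a) * (1 + Complex.I • a)
      = 1 + Complex.I • a + (-Complex.I) • star a + star a * a := by
    simp only [star_add, star_one, star_smul, Complex.star_def, Complex.conj_I]
    rw [neg_smul]
    have : -(Complex.I • star a) * Complex.I • a = star a * a := by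
      rw [neg_mul, smul_mul_smul_comm, Complex.I_mul_I, neg_smul, neg_neg, one_smul]
    simp only [add_mul, mul_add, one_mul, mul_one, this]
    abel
  have h1 := him (1 + a)
  have h2 := him (1 + Complex.I • a)
  rw [e1] at h1
  rw [e2] at h2
  simp only [map_add, map_smul, hunital, Complex.add_im, Complex.one_im,
    Complex.smul_im, Complex.neg_im, him a, smul_eq_mul, Complex.mul_im,
    Complex.I_re, Complex.I_im, Complex.neg_re] at h1 h2
  apply Complex.ext <;> simp [Complex.conj_re, Complex.conj_im] <;> linarith

lemma phi_alg (φ : A →ₗ[ℂ] ℂ) (c d : ℂ) (z : A) :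
    φ (algebraMap ℂ A c * z * algebraMap ℂ A d) = c * φ z * d := by
  rw [mul_assoc, ← Algebra.commutes d z, ← mul_assoc, ← map_mul,
    Algebra.smul_def (c * d) z |>.symm, map_smul]
  ring_nf

lemma map_sandwich (φ : A →ₗ[ℂ] ℂ) {n m : Type*} [Fintype n] [Fintype m]
    (B C : Matrix n m ℂ) (x : Matrix n n A) :
    ((B.map (algebraMap ℂ A))ᴴ * x * (C.map (algebraMap ℂ A))).map φ
      = Bᴴ * x.map φ * C := by
  ext a b
  simp only [Matrix.map_apply, Matrix.mul_apply, Matrix.conjTranspose_apply,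
    Finset.sum_mul, Finset.mul_sum, map_sum]
  refine Finset.sum_congr rfl fun q _ => Finset.sum_congr rfl fun p _ => ?_
  rw [← algebraMap_star_comm, phi_alg]

lemma mapPos (φ : A →ₗ[ℂ] ℂ) (hunital : φ 1 = 1)
    (hφpos : ∀ a : A, 0 ≤ φ (star a * a)) {m : Type*} [Fintype m] [DecidableEq m]
    (y : Matrix m m A) : ((yᴴ * y).map φ).PosSemidef := by
  have hM : (yᴴ * y).IsHermitian := by
    simpa using Matrix.isHermitian_mul_conjTranspose_self yᴴ
  refine Matrix.posSemidef_iff_dotProduct_mulVec.mpr ⟨?_, ?_⟩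
  · ext i j
    simp only [Matrix.conjTranspose_apply, Matrix.map_apply]
    rw [← hM.apply i j, phi_conj hunital hφpos]
    rfl
  · intro v
    set w : m → A := fun k => ∑ j, v j • y k j with hw
    have key : ∑ k, star (w k) * w k
        = ∑ i, ∑ j, (starRingEnd ℂ (v i) * v j) • (yᴴ * y) i j := by
      simp only [hw, star_sum, star_smul, Complex.star_def, Finset.sum_mul,
        Finset.mul_sum, smul_mul_smul_comm, Matrix.mul_apply,
        Matrix.conjTranspose_apply, Finset.smul_sum]
      refine Finset.sum_comm.trans ?_
      refine (Finset.sum_congr rfl fun i _ => Finset.sum_comm).trans ?_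
      exact Finset.sum_comm
    have hquad : star v ⬝ᵥ ((yᴴ * y).map φ) *ᵥ v = φ (∑ k, star (w k) * w k) := by
      rw [key]
      simp only [dotProduct, Matrix.mulVec, Pi.star_apply, Matrix.map_apply,
        map_sum, map_smul, smul_eq_mul, Finset.mul_sum, Complex.star_def]
      refine Finset.sum_congr rfl fun i _ => Finset.sum_congr rfl fun j _ => ?_
      ring
    rw [hquad, map_sum]
    exact Finset.sum_nonneg fun k _ => hφpos (w k)

/-- if `x ∈ M_{2n}(A)` is self-adjoint and `σ_{n,n}`-positive
and `φ` is a unital positive linear functional on `A`, then the scalar matrix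
`φ_{2n}(x)` (apply `φ` entrywise) is `σ_{n,n}`-positive in `M_{2n}(ℂ)`. -/
theorem alphaPos_entrywise_state (n : ℕ)
    (x : Matrix (Fin n ⊕ Fin n) (Fin n ⊕ Fin n) A)
    (hx : x.IsHermitian) (hpos : IsAlphaPos (sigmaBlk n) x)
    (φ : A →ₗ[ℂ] ℂ) (hunital : φ 1 = 1)
    (hφpos : ∀ a : A, 0 ≤ φ (star a * a)) :
    IsAlphaPosScalar (sigmaBlk n) (x.map φ) := by
  intro m ℓ γ hγ
  obtain ⟨y, hy⟩ := hpos m ℓ γ hγ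
  have h : ∑ i, (γ i)ᴴ * x.map φ * γ i = (yᴴ * y).map φ := by
    rw [← hy]
    have hms : (∑ i, ((γ i).map (algebraMap ℂ A))ᴴ * x * ((γ i).map (algebraMap ℂ A))).map φ
        = ∑ i, (((γ i).map (algebraMap ℂ A))ᴴ * x * ((γ i).map (algebraMap ℂ A))).map φ := by
      ext a b
      simp [Matrix.map_apply, Matrix.sum_apply, map_sum]
    rw [hms]
    exact Finset.sum_congr rfl fun i _ => (map_sandwich φ (γ i) (γ i) x).symm
  rw [h]
  exact mapPos φ hunital hφpos y
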